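/- A set function c on subsets of a space X which is monotone, continuous along increasing sequences of arbitrary sets (c(∪_i E_i) = lim c(E_i) for E_1 ⊂ E_2 ⊂ ⋯), and continuous along decreasing sequences of compact sets (c(∩_i K_i) = lim c(K_i)) is a Choquet capacity; consequently every Borel set E satisfies c(E) = sup{c(K) : K ⊂ E compact}. -/

import Mathlib

/-!
Intersecting with a compact exhaustion and using continuity from below reduces the claim to a
Borel set `A` inside a compact set. Such a set is analytic: `A = f '' (ℕ → ℕ)` for a continuous
`f`. Given `r < c A`, continuity from below chooses bounds `σ i` one coordinate at a time so that
every `f '' {x | ∀ i < n, x i ≤ σ i}` has capacity `> r`. The closures of these images are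
decreasing compacts whose intersection lies in the compact set `f '' {x | ∀ i, x i ≤ σ i} ⊆ A`,
so continuity along decreasing compacts gives the latter capacity `≥ r`.
-/

open Filter Topology Set MeasureTheory
open scoped ENNReal

structure IsChoquetCapacity {X : Type*} [TopologicalSpace X] (c : Set X → ℝ≥0∞) : Prop where
  mono : Monotone c
  tendsto_iUnion : ∀ E : ℕ → Set X, (∀ i, E i ⊆ E (i + 1)) →
    Tendsto (fun i => c (E i)) atTop (𝓝 (c (⋃ i, E i)))
  tendsto_iInter_of_isCompact : ∀ K : ℕ → Set X, (∀ i, IsCompact (K i)) →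
    (∀ i, K (i + 1) ⊆ K i) → Tendsto (fun i => c (K i)) atTop (𝓝 (c (⋂ i, K i)))

lemma exists_tendsto_of_mem_iInter_closure {X : Type*} [TopologicalSpace X]
    [FirstCountableTopology X] {s : ℕ → Set X} {y : X} (hy : y ∈ ⋂ n, closure (s n)) :
    ∃ u : ℕ → X, (∀ n, u n ∈ s n) ∧ Tendsto u atTop (𝓝 y) := by
  obtain ⟨V, hV⟩ := (𝓝 y).exists_antitone_basis
  have hmem : ∀ n, ∃ x ∈ s n, x ∈ V n := fun n =>
    (mem_closure_iff_nhds.1 (mem_iInter.1 hy n) (V n) (hV.mem n)).imp fun _ h => h.symm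
  choose u hus huV using hmem
  exact ⟨u, hus, hV.tendsto huV⟩

lemma exists_tendsto_subseq_of_mem_pi_Iio (σ : ℕ → ℕ) {x : ℕ → ℕ → ℕ}
    (hx : ∀ n, x n ∈ (Iio n).pi fun i => Iic (σ i)) :
    ∃ a ∈ univ.pi (fun i => Iic (σ i)), ∃ φ : ℕ → ℕ, StrictMono φ ∧
      Tendsto (x ∘ φ) atTop (𝓝 a) := by
  have hL : IsCompact (univ.pi fun i => Iic (σ i)) :=
    isCompact_univ_pi fun i => (finite_Iic _).isCompact
  -- Clamping `x n` to `σ` only changes coordinates `≥ n`, so it does not affect limits.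
  obtain ⟨a, ha, φ, hφ, hlim⟩ := hL.tendsto_subseq (x := fun n i => min (x n i) (σ i))
    fun n i _ => mem_Iic.2 (min_le_right _ _)
  refine ⟨a, ha, φ, hφ, tendsto_pi_nhds.2 fun i => (tendsto_pi_nhds.1 hlim i).congr' ?_⟩
  filter_upwards [eventually_gt_atTop i] with n hn
  exact min_eq_left (hx (φ n) i (hn.trans_le hφ.le_apply))

lemma iInter_closure_image_pi_Iio_subset {X : Type*} [TopologicalSpace X] [T2Space X]
    [FirstCountableTopology X] {f : (ℕ → ℕ) → X} (hf : Continuous f) (σ : ℕ → ℕ) :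
    ⋂ n, closure (f '' (Iio n).pi fun i => Iic (σ i)) ⊆ f '' univ.pi fun i => Iic (σ i) := by
  intro y hy
  obtain ⟨u, hu, hlim⟩ := exists_tendsto_of_mem_iInter_closure hy
  choose x hx hxu using hu
  obtain ⟨a, ha, φ, hφ, hxa⟩ := exists_tendsto_subseq_of_mem_pi_Iio σ hx
  have hfa : Tendsto (u ∘ φ) atTop (𝓝 (f a)) := by
    simpa only [Function.comp_def, hxu] using (hf.tendsto a).comp hxa
  exact ⟨a, ha, tendsto_nhds_unique hfa (hlim.comp hφ.tendsto_atTop)⟩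

namespace IsChoquetCapacity

variable {X : Type*} [TopologicalSpace X] {c : Set X → ℝ≥0∞}

lemma exists_lt_of_lt_iUnion (hc : IsChoquetCapacity c) {E : ℕ → Set X}
    (hE : ∀ i, E i ⊆ E (i + 1)) {r : ℝ≥0∞} (hr : r < c (⋃ i, E i)) : ∃ i, r < c (E i) :=
  ((hc.tendsto_iUnion E hE).eventually (eventually_gt_nhds hr)).exists

lemma exists_lt_image_inter_le (hc : IsChoquetCapacity c) (f : (ℕ → ℕ) → X)
    (S : Set (ℕ → ℕ)) (n : ℕ) {r : ℝ≥0∞} (hr : r < c (f '' S)) :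
    ∃ m, r < c (f '' (S ∩ {x | x n ≤ m})) := by
  have hS : f '' S = ⋃ m, f '' (S ∩ {x | x n ≤ m}) := by
    rw [← image_iUnion, ← inter_iUnion,
      iUnion_eq_univ_iff.2 fun x => ⟨x n, mem_ofPred.2 le_rfl⟩, inter_univ]
  rw [hS] at hr
  refine hc.exists_lt_of_lt_iUnion (fun m => ?_) hr
  exact image_mono (inter_subset_inter_right S fun x (hx : x n ≤ m) => hx.trans m.le_succ)

lemma exists_lt_image_pi_Iio (hc : IsChoquetCapacity c) (f : (ℕ → ℕ) → X) {r : ℝ≥0∞}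
    (hr : r < c (range f)) :
    ∃ σ : ℕ → ℕ, ∀ n, r < c (f '' (Iio n).pi fun i => Iic (σ i)) := by
  have hstep : ∀ (S : Set (ℕ → ℕ)) (n : ℕ),
      ∃ m, r < c (f '' S) → r < c (f '' (S ∩ {x | x n ≤ m})) := by
    intro S n
    by_cases hS : r < c (f '' S)
    · exact (hc.exists_lt_image_inter_le f S n hS).imp fun _ hm _ => hm
    · exact ⟨0, fun h => absurd h hS⟩
  choose m hm using hstep
  let S : ℕ → Set (ℕ → ℕ) := fun n => Nat.rec univ (fun n S => S ∩ {x | x n ≤ m S n}) n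
  refine ⟨fun n => m (S n) n, fun n => ?_⟩
  have hS : ∀ n, S n = (Iio n).pi fun i => Iic (m (S i) i) := by
    intro n
    induction n with
    | zero => simp [S]
    | succ n ih =>
      rw [Iio_add_one_eq_Iic, ← Iio_insert, insert_pi, ← ih]
      exact inter_comm _ _
  have hlt : ∀ n, r < c (f '' S n) := by
    intro n
    induction n with
    | zero => simpa [S] using hr
    | succ n ih => exact hm (S n) n ih
  exact hS n ▸ hlt n

lemma exists_isCompact_le_of_lt_range (hc : IsChoquetCapacity c) [T2Space X]
    [FirstCountableTopology X] {C : Set X} (hC : IsCompact C) {f : (ℕ → ℕ) → X}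
    (hf : Continuous f) (hfC : range f ⊆ C) {r : ℝ≥0∞} (hr : r < c (range f)) :
    ∃ K ⊆ range f, IsCompact K ∧ r ≤ c K := by
  obtain ⟨σ, hσ⟩ := hc.exists_lt_image_pi_Iio f hr
  set D : ℕ → Set X := fun n => closure (f '' (Iio n).pi fun i => Iic (σ i))
  have hD : ∀ n, IsCompact (D n) := fun n =>
    hC.of_isClosed_subset isClosed_closure
      (closure_minimal ((image_subset_range _ _).trans hfC) hC.isClosed)
  have hD_anti : ∀ n, D (n + 1) ⊆ D n := fun n =>
    closure_mono (image_mono (pi_mono' (fun _ _ => subset_rfl) (Iio_subset_Iio n.le_succ)))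
  have hrD : r ≤ c (⋂ n, D n) :=
    ge_of_tendsto (hc.tendsto_iInter_of_isCompact D hD hD_anti)
      (Eventually.of_forall fun n => ((hσ n).trans_le (hc.mono subset_closure)).le)
  refine ⟨f '' univ.pi fun i => Iic (σ i), image_subset_range _ _,
    (isCompact_univ_pi fun i => (finite_Iic _).isCompact).image hf, ?_⟩
  exact hrD.trans (hc.mono (iInter_closure_image_pi_Iio_subset hf σ))

lemma _root_.MeasureTheory.AnalyticSet.exists_isCompact_le_of_lt (hc : IsChoquetCapacity c)
    [T2Space X] [FirstCountableTopology X] {A C : Set X} (hA : AnalyticSet A)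
    (hC : IsCompact C) (hAC : A ⊆ C) {r : ℝ≥0∞} (hr : r < c A) :
    ∃ K ⊆ A, IsCompact K ∧ r ≤ c K := by
  rw [AnalyticSet] at hA
  rcases hA with rfl | ⟨f, hf, rfl⟩
  · exact ⟨∅, subset_rfl, isCompact_empty, hr.le⟩
  · exact hc.exists_isCompact_le_of_lt_range hC hf hAC hr

end IsChoquetCapacity

lemma MeasurableSet.analyticSet_of_subset_isCompact {X : Type*} [TopologicalSpace X]
    [T2Space X] [SecondCountableTopology X] [MeasurableSpace X] [BorelSpace X] {E C : Set X}
    (hE : MeasurableSet E) (hC : IsCompact C) (hEC : E ⊆ C) : AnalyticSet E := by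
  have : CompactSpace C := isCompact_iff_compactSpace.mp hC
  let := TopologicalSpace.metrizableSpaceMetric C
  have hE' : MeasurableSet ((↑) ⁻¹' E : Set C) := measurable_subtype_coe hE
  simpa [Subtype.image_preimage_coe, inter_eq_right.2 hEC] using
    hE'.analyticSet.image_of_continuous continuous_subtype_val

lemma IsChoquetCapacity.exists_isCompact_le_of_lt_of_measurableSet {X : Type*}
    [TopologicalSpace X] [LocallyCompactSpace X] [T2Space X] [SecondCountableTopology X]
    [MeasurableSpace X] [BorelSpace X] {c : Set X → ℝ≥0∞} (hc : IsChoquetCapacity c)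
    {E : Set X} (hE : MeasurableSet E) {r : ℝ≥0∞} (hr : r < c E) :
    ∃ K ⊆ E, IsCompact K ∧ r ≤ c K := by
  have hcov : ∀ j, E ∩ compactCovering X j ⊆ E ∩ compactCovering X (j + 1) := fun j =>
    inter_subset_inter_right E (compactCovering_subset X j.le_succ)
  rw [← inter_univ E, ← iUnion_compactCovering, inter_iUnion] at hr
  obtain ⟨j, hj⟩ := hc.exists_lt_of_lt_iUnion hcov hr
  have hC := isCompact_compactCovering X j
  obtain ⟨K, hKE, hK, hrK⟩ :=
    ((hE.inter hC.measurableSet).analyticSet_of_subset_isCompact hC inter_subset_right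
      ).exists_isCompact_le_of_lt hc hC inter_subset_right hj
  exact ⟨K, hKE.trans inter_subset_left, hK, hrK⟩

/-- Choquet capacitability: a monotone set function on a locally compact Hausdorff
second-countable space which is continuous along increasing sequences of arbitrary
sets and along decreasing sequences of compact sets satisfies
`c(E) = sup {c(K) : K ⊆ E compact}` for every Borel set `E`. -/
theorem choquet_capacitability {X : Type*} [TopologicalSpace X]
    [LocallyCompactSpace X] [T2Space X] [SecondCountableTopology X]
    [MeasurableSpace X] [BorelSpace X]
    (c : Set X → ENNReal)
    (hmono : ∀ A B : Set X, A ⊆ B → c A ≤ c B)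
    (hinc : ∀ E : ℕ → Set X, (∀ i, E i ⊆ E (i + 1)) →
      Tendsto (fun i => c (E i)) atTop (nhds (c (⋃ i, E i))))
    (hdec : ∀ K : ℕ → Set X, (∀ i, IsCompact (K i)) → (∀ i, K (i + 1) ⊆ K i) →
      Tendsto (fun i => c (K i)) atTop (nhds (c (⋂ i, K i)))) :
    ∀ E : Set X, MeasurableSet E →
      c E = ⨆ (K : Set X) (_ : IsCompact K) (_ : K ⊆ E), c K := by
  intro E hE
  have hc : IsChoquetCapacity c := ⟨fun A B => hmono A B, hinc, hdec⟩
  refine le_antisymm (le_of_forall_lt_imp_le_of_dense fun r hr => ?_)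
    (iSup₂_le fun K _ => iSup_le fun hKE => hc.mono hKE)
  obtain ⟨K, hKE, hK, hrK⟩ := hc.exists_isCompact_le_of_lt_of_measurableSet hE hr
  exact hrK.trans (le_iSup₂_of_le K hK (le_iSup_of_le hKE le_rfl))
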